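/- Let d ≥ 2, a, b ∈ ℤ_p. Then the ℤ_p-Lie lattices L^d(a) and L^e(b) are isomorphic if and only if d = e and v_p(a) = v_p(b). -/

import Mathlib

/-!
With `x₀` the distinguished basis vector and `φ` its coordinate functional, the bracket of
`L^d(a)` is `⁅x, y⁆ = a • (φ x • y - φ y • x)`. Hence every bracket lies in `a • L`, while
`⁅x₀, x₁⁆ = a • x₁` with `x₁` primitive, so an isomorphism `L^d(a) ≃ L^d(c)` forces `a ∣ c` and
`c ∣ a`. Conversely, if `a = u c` with `u` a unit, rescaling `x₀` by `u` is an isomorphism.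
In `ℤ_p` two elements are associated iff both vanish or they have the same valuation, and `d`
is the rank.
-/

open Module

section BracketFormula

variable {R L L' : Type*} [CommRing R] [LieRing L] [LieAlgebra R L] [LieRing L'] [LieAlgebra R L']

theorem lie_eq_smul_coord_smul_sub {ι : Type*} (b : Basis ι R L) {z : ι} {a : R}
    (hab : ∀ i j, i ≠ z → j ≠ z → ⁅b i, b j⁆ = 0) (h0 : ∀ i, i ≠ z → ⁅b z, b i⁆ = a • b i)
    (x y : L) : ⁅x, y⁆ = a • (b.coord z x • y - b.coord z y • x) := by
  let T : L →ₗ[R] L →ₗ[R] L := (b.coord z).smulRight LinearMap.id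
  have hT : (LieModule.toEnd R L L : L →ₗ[R] L →ₗ[R] L) = a • (T - T.flip) := by
    refine b.ext fun i => b.ext fun j => ?_
    simp only [LinearMap.smul_apply, LinearMap.sub_apply, LinearMap.flip_apply,
      LinearMap.smulRight_apply, LinearMap.id_apply, LieHom.coe_toLinearMap,
      LieModule.toEnd_apply_apply, Basis.coord_apply, Basis.repr_self, T]
    by_cases hi : i = z <;> by_cases hj : j = z
    · subst hi hj; simp
    · subst hi; simp [h0 j hj, hj]
    · subst hj; rw [← lie_skew, h0 i hi]; simp [hi]
    · simp [hab i j hi hj, hi, hj]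
  simpa [T, smul_sub] using LinearMap.congr_fun₂ hT x y

theorem dvd_of_lieEquiv {ι : Type*} (b : Basis ι R L) {x : L} {o : ι} {a c : R}
    (hx : ⁅x, b o⁆ = a • b o) (φ : L' →ₗ[R] R) (hL' : ∀ x y : L', ⁅x, y⁆ = c • (φ x • y - φ y • x))
    (f : L ≃ₗ⁅R⁆ L') : c ∣ a := by
  have hf : f (a • b o) = c • (φ (f x) • f (b o) - φ (f (b o)) • f x) := by
    rw [← hx, LieEquiv.map_lie, hL']
  have h : a • b o = c • f.symm (φ (f x) • f (b o) - φ (f (b o)) • f x) := by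
    rw [← f.symm_apply_apply (a • b o), hf]
    exact f.symm.toLinearEquiv.map_smul c _
  refine ⟨b.coord o (f.symm (φ (f x) • f (b o) - φ (f (b o)) • f x)), ?_⟩
  simpa using congrArg (b.coord o) h

theorem nonempty_lieEquiv_of_associated {ι : Type*} (b : Basis ι R L) (b' : Basis ι R L')
    {z : ι} {a c : R} (hac : Associated a c)
    (hL : ∀ x y : L, ⁅x, y⁆ = a • (b.coord z x • y - b.coord z y • x))
    (hL' : ∀ x y : L', ⁅x, y⁆ = c • (b'.coord z x • y - b'.coord z y • x)) :
    Nonempty (L ≃ₗ⁅R⁆ L') := by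
  classical
  obtain ⟨u, hu⟩ := hac.symm
  let w : ι → Rˣ := fun i => if i = z then u else 1
  let g : L ≃ₗ[R] L' := b.equiv (b'.unitsSMul w) (Equiv.refl ι)
  have hg : ∀ i, g (b i) = (w i : R) • b' i := fun i => by
    simp [g, Basis.equiv_apply, Basis.unitsSMul_apply, Units.smul_def]
  have hcoord : ∀ x, c * b'.coord z (g x) = a * b.coord z x := by
    suffices c • (b'.coord z ∘ₗ g.toLinearMap) = a • b.coord z from
      fun x => by simpa using LinearMap.congr_fun this x
    refine b.ext fun i => ?_
    by_cases hi : i = z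
    · subst hi; simp [hg, w, ← hu]
    · simp [hg, w, hi, Ne.symm hi]
  have hg_lie : ∀ x y : L, g ⁅x, y⁆ = ⁅g x, g y⁆ := fun x y => by
    rw [hL, hL', map_smul, map_sub, map_smul, map_smul, smul_sub, smul_sub, smul_smul, smul_smul,
      smul_smul, smul_smul, hcoord, hcoord]
  exact ⟨{ g with map_lie' := fun {x y} => hg_lie x y }⟩

theorem nonempty_lieEquiv_iff_associated [IsDomain R] {ι : Type*} {z o : ι} (hoz : o ≠ z)
    {a c : R} (b : Basis ι R L)
    (hab : ∀ i j, i ≠ z → j ≠ z → ⁅b i, b j⁆ = 0) (h0 : ∀ i, i ≠ z → ⁅b z, b i⁆ = a • b i)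
    (b' : Basis ι R L')
    (hab' : ∀ i j, i ≠ z → j ≠ z → ⁅b' i, b' j⁆ = 0) (h0' : ∀ i, i ≠ z → ⁅b' z, b' i⁆ = c • b' i) :
    Nonempty (L ≃ₗ⁅R⁆ L') ↔ Associated a c := by
  have hL := lie_eq_smul_coord_smul_sub b hab h0
  have hL' := lie_eq_smul_coord_smul_sub b' hab' h0'
  refine ⟨fun ⟨f⟩ => associated_of_dvd_dvd ?_ ?_,
    fun h => nonempty_lieEquiv_of_associated b b' h hL hL'⟩
  · exact dvd_of_lieEquiv b' (h0' o hoz) _ hL f.symm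
  · exact dvd_of_lieEquiv b (h0 o hoz) _ hL' f

end BracketFormula

namespace PadicInt

variable {p : ℕ} [Fact p.Prime]

theorem valuation_le_of_dvd {a c : ℤ_[p]} (hc : c ≠ 0) (h : a ∣ c) : a.valuation ≤ c.valuation := by
  obtain ⟨k, rfl⟩ := h
  rw [valuation_mul (left_ne_zero_of_mul hc) (right_ne_zero_of_mul hc)]
  omega

theorem associated_iff {a c : ℤ_[p]} :
    Associated a c ↔ (a = 0 ∧ c = 0) ∨ (a ≠ 0 ∧ c ≠ 0 ∧ a.valuation = c.valuation) := by
  by_cases ha : a = 0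
  · subst ha; simp [associated_zero_iff_eq_zero, Associated.comm]
  by_cases hc : c = 0
  · subst hc; simp [associated_zero_iff_eq_zero, ha]
  simp only [ha, hc, false_and, false_or, ne_eq, not_false_eq_true, true_and]
  refine ⟨fun h => le_antisymm (valuation_le_of_dvd hc h.dvd) (valuation_le_of_dvd ha h.symm.dvd),
    fun h => ?_⟩
  have hpow : ∀ {x : ℤ_[p]} (hx : x ≠ 0), Associated x ((p : ℤ_[p]) ^ x.valuation) := fun hx => by
    conv_lhs => rw [unitCoeff_spec hx]
    exact associated_unit_mul_left _ _ (Units.isUnit _)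
  exact (hpow ha).trans (h ▸ (hpow hc).symm)

end PadicInt

/-- For `d, e ≥ 2`, the `ℤ_p`-Lie lattices `L^d(a)` and `L^e(c)`
are isomorphic if and only if `d = e` and `v_p(a) = v_p(c)` (with `v_p(0) = ∞`). -/
theorem stmt_10 (p : ℕ) [Fact p.Prime] (d e : ℕ) (hd : 2 ≤ d) (he : 2 ≤ e)
    (a c : ℤ_[p])
    (L L' : Type*) [LieRing L] [LieAlgebra ℤ_[p] L] [LieRing L'] [LieAlgebra ℤ_[p] L']
    (b : Module.Basis (Fin d) ℤ_[p] L)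
    (hab : ∀ i j : Fin d, i ≠ ⟨0, by omega⟩ → j ≠ ⟨0, by omega⟩ → ⁅b i, b j⁆ = 0)
    (h0 : ∀ i : Fin d, i ≠ ⟨0, by omega⟩ → ⁅b ⟨0, by omega⟩, b i⁆ = a • b i)
    (b' : Module.Basis (Fin e) ℤ_[p] L')
    (hab' : ∀ i j : Fin e, i ≠ ⟨0, by omega⟩ → j ≠ ⟨0, by omega⟩ → ⁅b' i, b' j⁆ = 0)
    (h0' : ∀ i : Fin e, i ≠ ⟨0, by omega⟩ → ⁅b' ⟨0, by omega⟩, b' i⁆ = c • b' i) :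
    Nonempty (L ≃ₗ⁅ℤ_[p]⁆ L') ↔
      d = e ∧ ((a = 0 ∧ c = 0) ∨ (a ≠ 0 ∧ c ≠ 0 ∧ a.valuation = c.valuation)) := by
  have key : d = e → (Nonempty (L ≃ₗ⁅ℤ_[p]⁆ L') ↔ Associated a c) := by
    rintro rfl
    exact nonempty_lieEquiv_iff_associated (o := ⟨1, by omega⟩) (by simp [Fin.ext_iff])
      b hab h0 b' hab' h0'
  rw [← PadicInt.associated_iff]
  constructor
  · rintro ⟨f⟩
    have hde : d = e := by
      simpa using Fintype.card_congr (b.indexEquiv (b'.map f.symm.toLinearEquiv))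
    exact ⟨hde, (key hde).mp ⟨f⟩⟩
  · rintro ⟨hde, h⟩
    exact (key hde).mpr h
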